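/- arXiv:1411.7072 — 4 statements merged into one kernel-verified Lean document; each statement's English description precedes it below -/
import Mathlib

section
/- Let M be a complete Riemannian manifold (or a metric space), f : M → M a homeomorphism, K ⊆ M a compact invariant set, and suppose there exist η > 0 and ε > 0 such that for every x with d(x,K) ≤ η one has d(f⁻¹(x), K) ≤ e^{ε/2} d(x,K). If x₀ ∉ K and d(fⁿ(x₀), K) → 0, then liminf_{n→∞} (1/n) log d(fⁿ(x₀), K) ≥ −ε. -/
open Filter Metric Topology

/-- If `f` is a homeomorphism, `K` a nonempty compact invariant set, and the inverse
`f⁻¹` expands the distance to `K` by at most a factor `e^{ε/2}` on the `η`-neighborhood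
of `K`, then for any `x₀ ∉ K` whose forward orbit converges to `K`, the distance
`d(fⁿ x₀, K)` decays at exponential rate at most `ε`:
`liminf (1/n) log d(fⁿ x₀, K) ≥ −ε`. -/
theorem stmt4 {M : Type*} [MetricSpace M] (f : M ≃ₜ M) (K : Set M)
    (hKne : K.Nonempty) (hKc : IsCompact K) (hinv : f '' K = K)
    (ε η : ℝ) (hε : 0 < ε) (hη : 0 < η)
    (hcontr : ∀ x : M, infDist x K ≤ η →
      infDist (f.symm x) K ≤ Real.exp (ε / 2) * infDist x K)
    (x₀ : M) (hx₀ : x₀ ∉ K)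
    (hconv : Tendsto (fun n : ℕ => infDist ((⇑f)^[n] x₀) K) atTop (𝓝 0)) :
    -ε ≤ liminf (fun n : ℕ =>
      (1 / (n : ℝ)) * Real.log (infDist ((⇑f)^[n] x₀) K)) atTop := by
  set d : ℕ → ℝ := fun n => infDist ((⇑f)^[n] x₀) K with hd
  have hKmem : ∀ x ∈ K, f.symm x ∈ K := by
    intro x hx
    rw [← hinv] at hx
    obtain ⟨y, hy, rfl⟩ := hx
    simpa using hy
  have hnot : ∀ n, (⇑f)^[n] x₀ ∉ K := by
    intro n
    induction n with
    | zero => simpa using hx₀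
    | succ k ih =>
      intro h
      apply ih
      have := hKmem _ h
      rwa [Function.iterate_succ_apply', Homeomorph.symm_apply_apply] at this
  have hpos : ∀ n, 0 < d n := fun n =>
    (hKc.isClosed.notMem_iff_infDist_pos hKne).mp (hnot n)
  have hmin : (0:ℝ) < min η 1 := lt_min hη one_pos
  obtain ⟨N, hN⟩ := (eventually_atTop).mp (hconv.eventually_lt_const hmin)
  have key : ∀ k : ℕ, Real.exp (-(ε/2) * k) * d N ≤ d (N + k) := by
    intro k
    induction k with
    | zero => simp
    | succ k ih =>
      have h1 : d (N + k + 1) ≤ η := le_of_lt (lt_of_lt_of_le (hN (N+k+1) (by omega)) (min_le_left _ _))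
      have h2 := hcontr _ h1
      have heq : f.symm ((⇑f)^[N+k+1] x₀) = (⇑f)^[N+k] x₀ := by
        rw [Function.iterate_succ_apply', Homeomorph.symm_apply_apply]
      rw [heq] at h2
      have hstep : Real.exp (-(ε/2)) * d (N+k) ≤ d (N+k+1) := by
        rw [Real.exp_neg, inv_mul_le_iff₀ (Real.exp_pos _)]
        exact h2
      calc Real.exp (-(ε/2) * (k+1:ℕ)) * d N
          = Real.exp (-(ε/2)) * (Real.exp (-(ε/2)*k) * d N) := by
            rw [← mul_assoc, ← Real.exp_add]; push_cast; ring_nf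
        _ ≤ Real.exp (-(ε/2)) * d (N+k) :=
            mul_le_mul_of_nonneg_left ih (Real.exp_pos _).le
        _ ≤ d (N+k+1) := hstep
  set L := Real.log (d N) with hL
  have hlog : ∀ n, N ≤ n → -(ε/2) * n + L ≤ Real.log (d n) := by
    intro n hn
    obtain ⟨k, rfl⟩ := Nat.exists_eq_add_of_le hn
    have h1 := Real.log_le_log (mul_pos (Real.exp_pos _) (hpos N)) (key k)
    rw [Real.log_mul (Real.exp_ne_zero _) (hpos N).ne', Real.log_exp] at h1
    have : -(ε/2) * (N + k : ℕ) ≤ -(ε/2) * k := by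
      push_cast
      nlinarith [Nat.cast_nonneg (α := ℝ) N, Nat.cast_nonneg (α := ℝ) k]
    linarith
  have hLtend : Tendsto (fun n : ℕ => L / n) atTop (𝓝 0) :=
    tendsto_const_div_atTop_nhds_zero_nat L
  have hev : ∀ᶠ n : ℕ in atTop, -ε ≤ (1 / (n:ℝ)) * Real.log (d n) := by
    have h1 : ∀ᶠ n : ℕ in atTop, -(ε/2) < L / n :=
      hLtend.eventually_const_lt (by linarith)
    filter_upwards [h1, eventually_ge_atTop N, eventually_ge_atTop 1] with n hn1 hnN hn1'
    have hnpos : (0:ℝ) < n := by exact_mod_cast hn1'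
    have h2 := hlog n hnN
    have h3 : (1/(n:ℝ)) * (-(ε/2) * n + L) ≤ (1/(n:ℝ)) * Real.log (d n) :=
      mul_le_mul_of_nonneg_left h2 (by positivity)
    have h4 : (1/(n:ℝ)) * (-(ε/2) * n + L) = -(ε/2) + L / n := by
      have hn0 : (n:ℝ) ≠ 0 := hnpos.ne'
      field_simp
    rw [h4] at h3
    linarith
  have hub : ∀ᶠ n : ℕ in atTop, (1 / (n:ℝ)) * Real.log (d n) ≤ 0 := by
    filter_upwards [eventually_ge_atTop N, eventually_ge_atTop 1] with n hnN hn1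
    have hlt1 : d n < 1 := lt_of_lt_of_le (hN n hnN) (min_le_right _ _)
    have : Real.log (d n) ≤ 0 := Real.log_nonpos (hpos n).le hlt1.le
    have hn0 : (0:ℝ) ≤ 1/(n:ℝ) := by positivity
    exact mul_nonpos_of_nonneg_of_nonpos hn0 this
  exact le_liminf_of_le (isBoundedUnder_of_eventually_le hub).isCoboundedUnder_ge hev
end

section
/- Let (X,d) be a metric space, f : X → X a homeomorphism, K a nonempty compact f-invariant set, and suppose for every ε > 0 there exists η > 0 such that dist(f⁻¹(x), K) ≤ e^{ε/2} dist(x, K) whenever dist(x,K) ≤ η. Then for every x₀ ∉ K with dist(fⁿ(x₀),K) → 0 and every ε > 0, one has e^{εn} · dist(fⁿ(x₀), K) → ∞ as n → ∞. -/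
open Filter Metric Topology

/-- Suppose `f` is a homeomorphism, `K` a nonempty compact invariant set, and for every
`ε > 0` there is `η > 0` such that `f⁻¹` expands the distance to `K` by at most `e^{ε/2}`
on the `η`-neighborhood of `K`. Then every orbit converging to `K` from outside `K`
converges more slowly than any exponential: `e^{εn}·d(fⁿ x₀, K) → ∞` for all `ε > 0`. -/
theorem stmt5 {X : Type*} [MetricSpace X] (f : X ≃ₜ X) (K : Set X)
    (hKne : K.Nonempty) (hKc : IsCompact K) (hinv : f '' K = K)
    (hcontr : ∀ ε : ℝ, 0 < ε → ∃ η : ℝ, 0 < η ∧ ∀ x : X, infDist x K ≤ η →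
      infDist (f.symm x) K ≤ Real.exp (ε / 2) * infDist x K)
    (x₀ : X) (hx₀ : x₀ ∉ K)
    (hconv : Tendsto (fun n : ℕ => infDist ((⇑f)^[n] x₀) K) atTop (𝓝 0)) :
    ∀ ε : ℝ, 0 < ε →
      Tendsto (fun n : ℕ => Real.exp (ε * n) * infDist ((⇑f)^[n] x₀) K) atTop atTop := by
  intro ε hε
  -- orbit stays outside K
  have horb : ∀ n : ℕ, (⇑f)^[n] x₀ ∉ K := by
    intro n
    induction n with
    | zero => simpa using hx₀
    | succ n ih =>
      intro h
      rw [Function.iterate_succ_apply'] at h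
      apply ih
      have : f.symm (f ((⇑f)^[n] x₀)) ∈ f.symm '' K := ⟨_, h, rfl⟩
      rw [f.symm_apply_apply] at this
      have himg : f.symm '' K = K := by
        conv_lhs => rw [← hinv]
        ext y; constructor
        · rintro ⟨z, ⟨w, hw, rfl⟩, rfl⟩; simpa using hw
        · intro hy; exact ⟨f y, ⟨y, hy, rfl⟩, f.symm_apply_apply y⟩
      rwa [himg] at this
  have hpos : ∀ n : ℕ, 0 < infDist ((⇑f)^[n] x₀) K := fun n =>
    (hKc.isClosed.notMem_iff_infDist_pos hKne).mp (horb n)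
  obtain ⟨η, hη, hc⟩ := hcontr ε hε
  obtain ⟨N, hN⟩ := (Metric.tendsto_atTop.mp hconv η hη)
  have hsmall : ∀ n ≥ N, infDist ((⇑f)^[n] x₀) K ≤ η := by
    intro n hn
    have := hN n hn
    rw [Real.dist_eq, sub_zero, abs_of_nonneg (infDist_nonneg)] at this
    exact this.le
  -- key induction: d (N+m) ≥ exp(-ε m/2) * d N
  have key : ∀ m : ℕ, Real.exp (-(ε * m) / 2) * infDist ((⇑f)^[N] x₀) K ≤
      infDist ((⇑f)^[N + m] x₀) K := by
    intro m
    induction m with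
    | zero => simp
    | succ m ih =>
      have hstep : infDist ((⇑f)^[N + m] x₀) K ≤
          Real.exp (ε / 2) * infDist ((⇑f)^[N + m + 1] x₀) K := by
        have h1 := hc ((⇑f)^[N + m + 1] x₀) (hsmall _ (by omega))
        rw [Function.iterate_succ_apply' f (N+m), f.symm_apply_apply] at h1
        rw [Function.iterate_succ_apply']
        exact h1
      have h2 : Real.exp (-(ε / 2)) * infDist ((⇑f)^[N + m] x₀) K ≤
          infDist ((⇑f)^[N + m + 1] x₀) K := by
        rw [Real.exp_neg]
        rw [inv_mul_le_iff₀ (Real.exp_pos _)]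
        linarith [hstep]
      calc Real.exp (-(ε * (m + 1 : ℕ)) / 2) * infDist ((⇑f)^[N] x₀) K
          = Real.exp (-(ε / 2)) * (Real.exp (-(ε * m) / 2) * infDist ((⇑f)^[N] x₀) K) := by
            rw [← mul_assoc, ← Real.exp_add]; push_cast; ring_nf
        _ ≤ Real.exp (-(ε / 2)) * infDist ((⇑f)^[N + m] x₀) K := by
            exact mul_le_mul_of_nonneg_left ih (Real.exp_pos _).le
        _ ≤ infDist ((⇑f)^[N + m + 1] x₀) K := h2
  -- lower bound: for n ≥ N, exp(ε n) * d n ≥ c * exp(ε n / 2)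
  set c : ℝ := Real.exp (ε * N / 2) * infDist ((⇑f)^[N] x₀) K with hcdef
  have hcpos : 0 < c := mul_pos (Real.exp_pos _) (hpos N)
  have hbound : ∀ n ≥ N, c * Real.exp (ε / 2 * n) ≤
      Real.exp (ε * n) * infDist ((⇑f)^[n] x₀) K := by
    intro n hn
    obtain ⟨m, rfl⟩ := Nat.exists_eq_add_of_le hn
    have hk := key m
    have h3 := mul_le_mul_of_nonneg_left hk (Real.exp_pos (ε * (N + m : ℕ))).le
    calc c * Real.exp (ε / 2 * (N + m : ℕ))
        = Real.exp (ε * (N + m : ℕ)) *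
            (Real.exp (-(ε * m) / 2) * infDist ((⇑f)^[N] x₀) K) := by
          have hexp : Real.exp (ε * N / 2) * Real.exp (ε / 2 * (N + m : ℕ)) =
              Real.exp (ε * (N + m : ℕ)) * Real.exp (-(ε * m) / 2) := by
            rw [← Real.exp_add, ← Real.exp_add]; congr 1; push_cast; ring
          rw [hcdef, mul_right_comm, hexp, mul_assoc]
      _ ≤ Real.exp (ε * (N + m : ℕ)) * infDist ((⇑f)^[N + m] x₀) K := h3
  have hgrow : Tendsto (fun n : ℕ => c * Real.exp (ε / 2 * n)) atTop atTop := by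
    apply Tendsto.const_mul_atTop hcpos
    exact Real.tendsto_exp_atTop.comp
      ((tendsto_natCast_atTop_atTop).const_mul_atTop (by linarith))
  exact tendsto_atTop_mono' atTop
    (eventually_atTop.mpr ⟨N, hbound⟩) hgrow
end

section
/- Let E be a finite-dimensional normed vector space, T : ℕ → (E →L[ℝ] E) a sequence of invertible linear maps, and suppose there is ε > 0 and N ≥ 1 such that ‖T(n)‖ ≤ e^{nε/8} for all n ≥ N. Define for x ∈ E the norm ‖u‖' = Σ_{n=0}^{k} e^{-nε/4} ‖T(n) u‖ for a fixed k ≥ N. Then for k sufficiently large, ‖T(1) u‖'-type estimates give: for every nonzero u, Σ_{n=0}^{k} e^{-nε/4}‖T(n+1)u‖ ≤ (e^{ε/4} + e^{-kε/8}) · Σ_{n=0}^{k} e^{-nε/4}‖T(n)u‖, provided ‖T(k+1)u‖ ≤ e^{(k+1)ε/8}‖u‖ and ‖u‖ ≤ Σ_{n=0}^k e^{-nε/4}‖T(n)u‖. -/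
open Finset

/-- Estimate for the adapted (Lyapunov) norm `‖u‖' = Σ_{n=0}^{k} e^{-nε/4}‖T(n)u‖`:
if `T 0 = id`, `‖T n u‖ ≤ e^{nε/8}‖u‖` for all `n ≥ N` and `k ≥ N`, then for any
nonzero `u`,
`Σ_{n=0}^{k} e^{-nε/4}‖T(n+1)u‖ ≤ (e^{ε/4} + e^{-kε/8})·Σ_{n=0}^{k} e^{-nε/4}‖T(n)u‖`,
provided `‖T(k+1)u‖ ≤ e^{(k+1)ε/8}‖u‖` and `‖u‖ ≤ Σ_{n=0}^k e^{-nε/4}‖T(n)u‖`. -/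
theorem stmt6 {E : Type*} [NormedAddCommGroup E] [NormedSpace ℝ E]
    [FiniteDimensional ℝ E]
    (T : ℕ → E →L[ℝ] E) (hT0 : T 0 = ContinuousLinearMap.id ℝ E)
    (ε : ℝ) (hε : 0 < ε) (N : ℕ) (hN : 1 ≤ N)
    (hgrowth : ∀ n, N ≤ n → ∀ v : E, ‖T n v‖ ≤ Real.exp ((n : ℝ) * ε / 8) * ‖v‖)
    (k : ℕ) (hk : N ≤ k) (u : E) (hu : u ≠ 0)
    (hk1 : ‖T (k + 1) u‖ ≤ Real.exp (((k : ℝ) + 1) * ε / 8) * ‖u‖)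
    (hnorm : ‖u‖ ≤ ∑ n ∈ Finset.range (k + 1), Real.exp (-(n : ℝ) * ε / 4) * ‖T n u‖) :
    ∑ n ∈ Finset.range (k + 1), Real.exp (-(n : ℝ) * ε / 4) * ‖T (n + 1) u‖ ≤
      (Real.exp (ε / 4) + Real.exp (-(k : ℝ) * ε / 8)) *
        ∑ n ∈ Finset.range (k + 1), Real.exp (-(n : ℝ) * ε / 4) * ‖T n u‖ := by
  set g : ℕ → ℝ := fun n => Real.exp (-(n : ℝ) * ε / 4) * ‖T n u‖ with hg
  have hSnonneg : 0 ≤ ∑ n ∈ Finset.range (k + 1), g n :=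
    Finset.sum_nonneg fun n _ => by positivity
  have hg0 : g 0 = ‖u‖ := by simp [hg, hT0]
  have key : ∑ n ∈ Finset.range (k + 1), Real.exp (-(n : ℝ) * ε / 4) * ‖T (n + 1) u‖
      = Real.exp (ε / 4) * ∑ n ∈ Finset.range (k + 1), g (n + 1) := by
    rw [Finset.mul_sum]
    refine Finset.sum_congr rfl fun n _ => ?_
    simp only [hg]
    rw [← mul_assoc, ← Real.exp_add]
    push_cast
    ring_nf
  have shift : ∑ n ∈ Finset.range (k + 1), g (n + 1)
      = (∑ n ∈ Finset.range (k + 1), g n) + g (k + 1) - g 0 := by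
    have := Finset.sum_range_succ' g (k + 1)
    have h2 := Finset.sum_range_succ g (k + 1)
    linarith [this, h2]
  have hgk1 : g (k + 1) ≤ g 0 := by
    rw [hg0]
    simp only [hg]
    calc Real.exp (-((k + 1 : ℕ) : ℝ) * ε / 4) * ‖T (k + 1) u‖
        ≤ Real.exp (-((k : ℝ) + 1) * ε / 4) * (Real.exp (((k : ℝ) + 1) * ε / 8) * ‖u‖) := by
          push_cast
          exact mul_le_mul_of_nonneg_left hk1 (Real.exp_nonneg _)
      _ = Real.exp (-((k : ℝ) + 1) * ε / 8) * ‖u‖ := by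
          rw [← mul_assoc, ← Real.exp_add]; ring_nf
      _ ≤ 1 * ‖u‖ := by
          apply mul_le_mul_of_nonneg_right _ (norm_nonneg _)
          rw [Real.exp_le_one_iff]
          have : (0:ℝ) ≤ (k : ℝ) + 1 := by positivity
          nlinarith
      _ = ‖u‖ := one_mul _
  rw [key]
  have h1 : Real.exp (ε / 4) * ∑ n ∈ Finset.range (k + 1), g (n + 1)
      ≤ Real.exp (ε / 4) * ∑ n ∈ Finset.range (k + 1), g n := by
    apply mul_le_mul_of_nonneg_left _ (Real.exp_nonneg _)
    rw [shift]; linarith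
  have h2 : (0:ℝ) ≤ Real.exp (-(k : ℝ) * ε / 8) * ∑ n ∈ Finset.range (k + 1), g n :=
    mul_nonneg (Real.exp_nonneg _) hSnonneg
  calc Real.exp (ε / 4) * ∑ n ∈ Finset.range (k + 1), g (n + 1)
      ≤ Real.exp (ε / 4) * ∑ n ∈ Finset.range (k + 1), g n := h1
    _ ≤ (Real.exp (ε / 4) + Real.exp (-(k : ℝ) * ε / 8)) * ∑ n ∈ Finset.range (k + 1), g n := by
        rw [add_mul]; linarith
end

section
/- Let η : ℝ/ℤ → ℝ be a Lipschitz function. Then the graph of η, as a subset of the annulus (ℝ/ℤ) × ℝ, is C¹-regular at a point (θ, η(θ)) if and only if η is differentiable at θ and the paratangent cone at (θ, η(θ)) is the line of slope η'(θ); in particular, the graph of η is C¹-regular at every point if and only if η is continuously differentiable. -/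
open Filter Topology

/-- The (Bouligand) paratangent cone of `K ⊆ ℝ²` at `x`: all limits of sequences
`t_n • (a_n − b_n)` where `a_n, b_n ∈ K` converge to `x`. -/
def paratangentCone (K : Set (ℝ × ℝ)) (x : ℝ × ℝ) : Set (ℝ × ℝ) :=
  {v | ∃ (t : ℕ → ℝ) (a b : ℕ → ℝ × ℝ),
    (∀ n, a n ∈ K) ∧ (∀ n, b n ∈ K) ∧
    Tendsto a atTop (𝓝 x) ∧ Tendsto b atTop (𝓝 x) ∧
    Tendsto (fun n => t n • (a n - b n)) atTop (𝓝 v)}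

/-- `K` is `C¹`-regular at `x` if its paratangent cone at `x` is contained in a line
(through the origin). -/
def C1RegularAt (K : Set (ℝ × ℝ)) (x : ℝ × ℝ) : Prop :=
  ∃ w : ℝ × ℝ, w ≠ 0 ∧ paratangentCone K x ⊆ {v | ∃ c : ℝ, v = c • w}

/-! A Lipschitz function has bounded chord slopes, so by compactness every sequence of chords
with both ends tending to `(x, f x)` has a subsequence whose slopes converge to some `m`, and
`(1, m)` then lies in the paratangent cone. Hence, for Lipschitz `f`, the cone lies in a line iff
all chord slopes `(f a - f b) / (a - b)` with `a, b → x` converge to a single `s`, i.e. iff `f` is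
strictly differentiable at `x`; the cone is then the whole line of slope `s`. Finally, strict
differentiability at every point is the same as being `C¹`: a strict derivative at `x` controls
the chord slopes near `x`, hence the derivatives near `x`. -/

open Asymptotics Set

def slopeLine (s : ℝ) : Set (ℝ × ℝ) := {v | ∃ c : ℝ, v = c • ((1 : ℝ), s)}

theorem mk_one_mem_slopeLine_iff {m s : ℝ} : ((1 : ℝ), m) ∈ slopeLine s ↔ m = s := by
  constructor
  · rintro ⟨c, hc⟩
    simp only [Prod.smul_mk, smul_eq_mul, mul_one, Prod.mk.injEq] at hc
    rw [hc.2, ← hc.1, one_mul]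
  · rintro rfl
    exact ⟨1, (one_smul ℝ _).symm⟩

theorem smul_mem_paratangentCone {K : Set (ℝ × ℝ)} {p v : ℝ × ℝ} (c : ℝ)
    (hv : v ∈ paratangentCone K p) : c • v ∈ paratangentCone K p := by
  obtain ⟨t, a, b, ha, hb, hat, hbt, hlim⟩ := hv
  exact ⟨fun n => c * t n, a, b, ha, hb, hat, hbt, by
    simpa only [mul_smul] using hlim.const_smul c⟩

section

variable {f : ℝ → ℝ} {x s : ℝ}

theorem abs_slope_sub_le_iff {a b c : ℝ} (hab : a ≠ b) :
    |slope f a b - s| ≤ c ↔ |f b - f a - (b - a) * s| ≤ c * |b - a| := by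
  have hba : 0 < |b - a| := abs_pos.2 (sub_ne_zero.2 hab.symm)
  rw [← div_le_iff₀ hba, ← abs_div, sub_div, mul_div_cancel_left₀ _ (sub_ne_zero.2 hab.symm),
    slope_def_field]

theorem LipschitzWith.abs_slope_le {C : NNReal} (hf : LipschitzWith C f) (a b : ℝ) :
    |slope f a b| ≤ C := by
  rw [slope_def_field, abs_div]
  refine div_le_of_le_mul₀ (abs_nonneg _) C.2 ?_
  simpa only [Real.dist_eq] using hf.dist_le_mul b a

theorem LipschitzWith.exists_tendsto_slope_subseq {C : NNReal} (hf : LipschitzWith C f)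
    (a b : ℕ → ℝ) :
    ∃ m, ∃ φ : ℕ → ℕ, StrictMono φ ∧
      Tendsto (fun n => slope f (a (φ n)) (b (φ n))) atTop (𝓝 m) := by
  obtain ⟨m, -, φ, hφ, hm⟩ :=
    isCompact_Icc.tendsto_subseq fun n => abs_le.1 (hf.abs_slope_le (a n) (b n))
  exact ⟨m, φ, hφ, hm⟩

theorem mk_one_mem_paratangentCone_graph (hf : ContinuousAt f x) {a b : ℕ → ℝ} {m : ℝ}
    (ha : Tendsto a atTop (𝓝 x)) (hb : Tendsto b atTop (𝓝 x)) (hab : ∀ᶠ n in atTop, a n ≠ b n)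
    (hm : Tendsto (fun n => slope f (a n) (b n)) atTop (𝓝 m)) :
    ((1 : ℝ), m) ∈ paratangentCone f.graph (x, f x) := by
  refine ⟨fun n => (b n - a n)⁻¹, fun n => (b n, f (b n)), fun n => (a n, f (a n)),
    fun n => rfl, fun n => rfl, hb.prodMk_nhds (hf.tendsto.comp hb),
    ha.prodMk_nhds (hf.tendsto.comp ha), (tendsto_const_nhds.prodMk_nhds hm).congr' ?_⟩
  filter_upwards [hab] with n hn
  simp [slope_def_field, inv_mul_cancel₀ (sub_ne_zero.2 hn.symm), div_eq_inv_mul]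

theorem mk_one_mem_paratangentCone_graph_of_tendsto_nhdsNE (hf : ContinuousAt f x)
    {a : ℕ → ℝ} {m : ℝ} (ha : Tendsto a atTop (𝓝[≠] x))
    (hm : Tendsto (fun n => slope f x (a n)) atTop (𝓝 m)) :
    ((1 : ℝ), m) ∈ paratangentCone f.graph (x, f x) :=
  mk_one_mem_paratangentCone_graph hf tendsto_const_nhds (tendsto_nhds_of_tendsto_nhdsWithin ha)
    ((tendsto_nhdsWithin_iff.1 ha).2.mono fun _ hn => Ne.symm hn) hm

theorem HasDerivAt.mk_one_mem_paratangentCone_graph (h : HasDerivAt f s x) :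
    ((1 : ℝ), s) ∈ paratangentCone f.graph (x, f x) := by
  obtain ⟨a, ha⟩ := exists_seq_tendsto (𝓝[≠] x)
  exact mk_one_mem_paratangentCone_graph_of_tendsto_nhdsNE h.continuousAt ha
    (h.tendsto_slope.comp ha)

theorem LipschitzWith.exists_mk_one_mem_paratangentCone_graph {C : NNReal}
    (hf : LipschitzWith C f) (x : ℝ) : ∃ m, ((1 : ℝ), m) ∈ paratangentCone f.graph (x, f x) := by
  obtain ⟨a, ha⟩ := exists_seq_tendsto (𝓝[≠] x)
  obtain ⟨m, φ, hφ, hm⟩ := hf.exists_tendsto_slope_subseq (fun _ => x) a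
  exact ⟨m, mk_one_mem_paratangentCone_graph_of_tendsto_nhdsNE hf.continuous.continuousAt
    (ha.comp hφ.tendsto_atTop) hm⟩

theorem hasStrictDerivAt_of_tendsto_slope
    (h : Tendsto (fun p : ℝ × ℝ => slope f p.2 p.1) (𝓝[(diagonal ℝ)ᶜ] (x, x)) (𝓝 s)) :
    HasStrictDerivAt f s x := by
  refine hasStrictFDerivAt_iff_isLittleO.2 (isLittleO_iff.2 fun c hc => ?_)
  filter_upwards [eventually_nhdsWithin_iff.1 (h.eventually (Metric.closedBall_mem_nhds s hc))]
    with p hp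
  rcases eq_or_ne p.2 p.1 with heq | hne
  · simp [heq]
  · simpa [mul_comm] using (abs_slope_sub_le_iff hne).1 (hp (Ne.symm hne))

theorem HasStrictDerivAt.paratangentCone_graph_subset (h : HasStrictDerivAt f s x) :
    paratangentCone f.graph (x, f x) ⊆ slopeLine s := by
  rintro v ⟨t, a, b, ha, hb, hat, hbt, hv⟩
  set u := fun n => t n * ((a n).1 - (b n).1)
  set r := fun n => f (a n).1 - f (b n).1 - ((a n).1 - (b n).1) * s
  have hu : Tendsto u atTop (𝓝 v.1) := (continuous_fst.tendsto v).comp hv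
  -- `r = o(a.1 - b.1)` by strict differentiability, and `u = t * (a.1 - b.1)` is bounded.
  have hr : Tendsto (fun n => t n * r n) atTop (𝓝 0) := by
    have hlo := (hasStrictFDerivAt_iff_isLittleO.1 h).comp_tendsto
      ((continuous_fst.tendsto _).comp hat |>.prodMk_nhds ((continuous_fst.tendsto _).comp hbt))
    refine (isLittleO_one_iff ℝ).1 (((isBigO_refl t atTop).mul_isLittleO hlo).trans_isBigO ?_)
    exact hu.isBigO_one ℝ
  have hw : Tendsto (fun n => t n * r n + s * u n) atTop (𝓝 v.2) := by
    refine ((continuous_snd.tendsto v).comp hv).congr fun n => ?_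
    have hfa : f (a n).1 = (a n).2 := ha n
    have hfb : f (b n).1 = (b n).2 := hb n
    simp only [Function.comp_apply, Prod.smul_snd, Prod.snd_sub, smul_eq_mul, u, r, hfa, hfb]
    ring
  refine ⟨v.1, Prod.ext (mul_one _).symm ?_⟩
  calc v.2 = s * v.1 := tendsto_nhds_unique hw (by simpa using hr.add (hu.const_mul s))
    _ = _ := by simp [mul_comm]

theorem HasStrictDerivAt.paratangentCone_graph_eq (h : HasStrictDerivAt f s x) :
    paratangentCone f.graph (x, f x) = slopeLine s := by
  refine h.paratangentCone_graph_subset.antisymm ?_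
  rintro _ ⟨c, rfl⟩
  exact smul_mem_paratangentCone c h.hasDerivAt.mk_one_mem_paratangentCone_graph

theorem LipschitzWith.hasStrictDerivAt_of_paratangentCone_graph_subset {C : NNReal}
    (hf : LipschitzWith C f) (h : paratangentCone f.graph (x, f x) ⊆ slopeLine s) :
    HasStrictDerivAt f s x := by
  refine hasStrictDerivAt_of_tendsto_slope (tendsto_of_subseq_tendsto fun p hp => ?_)
  obtain ⟨m, φ, hφ, hm⟩ := hf.exists_tendsto_slope_subseq (fun n => (p n).2) (fun n => (p n).1)
  have hpφ := tendsto_nhdsWithin_iff.1 (hp.comp hφ.tendsto_atTop)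
  have hmem : ((1 : ℝ), m) ∈ paratangentCone f.graph (x, f x) :=
    mk_one_mem_paratangentCone_graph hf.continuous.continuousAt
      ((continuous_snd.tendsto _).comp hpφ.1) ((continuous_fst.tendsto _).comp hpφ.1)
      (hpφ.2.mono fun _ hn => Ne.symm hn) hm
  exact ⟨φ, mk_one_mem_slopeLine_iff.1 (h hmem) ▸ hm⟩

theorem LipschitzWith.c1RegularAt_graph_iff {C : NNReal} (hf : LipschitzWith C f) :
    C1RegularAt f.graph (x, f x) ↔ ∃ s, HasStrictDerivAt f s x := by
  refine ⟨fun ⟨w, hw, h⟩ => ?_, fun ⟨s, hs⟩ => ⟨(1, s), by simp, hs.paratangentCone_graph_subset⟩⟩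
  -- The cone contains some `(1, m)`, so the line `ℝ w` is not vertical.
  obtain ⟨m, hm⟩ := hf.exists_mk_one_mem_paratangentCone_graph x
  obtain ⟨c, hc⟩ := h hm
  have hw1 : c * w.1 = 1 := (congrArg Prod.fst hc).symm
  refine ⟨w.2 / w.1, hf.hasStrictDerivAt_of_paratangentCone_graph_subset fun v hv => ?_⟩
  obtain ⟨d, rfl⟩ := h hv
  refine ⟨d * w.1, Prod.ext (by simp) ?_⟩
  have : w.1 ≠ 0 := right_ne_zero_of_mul_eq_one hw1
  simp [field]

theorem continuous_of_forall_hasStrictDerivAt {f' : ℝ → ℝ}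
    (h : ∀ x, HasStrictDerivAt f (f' x) x) : Continuous f' := by
  refine continuous_iff_continuousAt.2 fun x => Metric.tendsto_nhds.2 fun ε hε => ?_
  have hx := (hasStrictFDerivAt_iff_isLittleO.1 (h x)).def (half_pos hε)
  have hy : ∀ᶠ y in 𝓝 x, ∀ᶠ z in 𝓝 y, |f z - f y - (z - y) * f' x| ≤ ε / 2 * |z - y| := by
    have hdiag : Tendsto (fun y => (y, y)) (𝓝 x) (𝓝 (x, x)) :=
      tendsto_id.prodMk_nhds tendsto_id
    filter_upwards [hdiag.eventually (eventually_eventually_nhds.2 hx)] with y hy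
    have hpair : Tendsto (fun z => (z, y)) (𝓝 y) (𝓝 (y, y)) :=
      tendsto_id.prodMk_nhds tendsto_const_nhds
    filter_upwards [hpair.eventually hy] with z hz
    simpa [mul_comm] using hz
  filter_upwards [hy] with y hy
  have hslope : ∀ᶠ z in 𝓝[≠] y, dist (slope f y z) (f' x) ≤ ε / 2 := by
    filter_upwards [self_mem_nhdsWithin, nhdsWithin_le_nhds hy] with z hzy hz
    exact (abs_slope_sub_le_iff (Ne.symm hzy)).2 hz
  exact (le_of_tendsto ((h y).hasDerivAt.tendsto_slope.dist tendsto_const_nhds) hslope).trans_lt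
    (half_lt_self hε)

theorem contDiff_one_iff_forall_hasStrictDerivAt :
    ContDiff ℝ 1 f ↔ ∀ x, ∃ s, HasStrictDerivAt f s x := by
  refine ⟨fun hf x => ⟨_, hf.hasStrictDerivAt one_ne_zero⟩, fun h => ?_⟩
  choose f' hf' using h
  have hderiv : deriv f = f' := funext fun x => (hf' x).hasDerivAt.deriv
  exact contDiff_one_iff_deriv.2 ⟨fun x => (hf' x).hasDerivAt.differentiableAt,
    hderiv ▸ continuous_of_forall_hasStrictDerivAt hf'⟩

end

theorem stmt7_general (η : ℝ → ℝ) (L : ℝ) (hη : LipschitzWith (Real.toNNReal L) η)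
    (K : Set (ℝ × ℝ)) (hK : K = {p : ℝ × ℝ | ∃ θ : ℝ, p = (θ, η θ)}) :
    (∀ θ : ℝ, C1RegularAt K (θ, η θ) ↔
      (DifferentiableAt ℝ η θ ∧
        paratangentCone K (θ, η θ) = {v | ∃ c : ℝ, v = c • ((1 : ℝ), deriv η θ)})) ∧
    ((∀ θ : ℝ, C1RegularAt K (θ, η θ)) ↔ ContDiff ℝ 1 η) := by
  obtain rfl : K = η.graph := hK.trans (by ext ⟨a, b⟩; simp [eq_comm])
  refine ⟨fun θ => ⟨fun h => ?_, fun ⟨_, hcone⟩ => ⟨(1, deriv η θ), by simp, hcone.le⟩⟩, ?_⟩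
  · obtain ⟨s, hs⟩ := hη.c1RegularAt_graph_iff.1 h
    rw [hs.hasDerivAt.deriv]
    exact ⟨hs.hasDerivAt.differentiableAt, hs.paratangentCone_graph_eq⟩
  · simp_rw [hη.c1RegularAt_graph_iff, contDiff_one_iff_forall_hasStrictDerivAt]

/-- For the graph of a Lipschitz function `η` on the circle (encoded as a `1`-periodic
Lipschitz function `η : ℝ → ℝ`): the graph is `C¹`-regular at `(θ, η θ)` if and only if
`η` is differentiable at `θ` and the paratangent cone there is exactly the line of slope
`η'(θ)`; and the graph is `C¹`-regular at every point if and only if `η` is `C¹`. -/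
theorem stmt7 (η : ℝ → ℝ) (L : ℝ) (hη : LipschitzWith (Real.toNNReal L) η)
    (hper : ∀ t : ℝ, η (t + 1) = η t)
    (K : Set (ℝ × ℝ)) (hK : K = {p : ℝ × ℝ | ∃ θ : ℝ, p = (θ, η θ)}) :
    (∀ θ : ℝ, C1RegularAt K (θ, η θ) ↔
      (DifferentiableAt ℝ η θ ∧
        paratangentCone K (θ, η θ) = {v | ∃ c : ℝ, v = c • ((1 : ℝ), deriv η θ)})) ∧
    ((∀ θ : ℝ, C1RegularAt K (θ, η θ)) ↔ ContDiff ℝ 1 η) :=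
  stmt7_general η L hη K hK
end
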